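/- arXiv:1502.04556 — 11 statements merged into one kernel-verified Lean document; each statement's English description precedes it below -/
import Mathlib

section
/- Let X be a Tychonoff space. Then X is locally realcompact if and only if X ⊆ βX \ cl_{βX}(υX \ X), i.e., X is disjoint from the closure in βX of υX \ X. -/
def IsRealcompactSpace (Y : Type) [TopologicalSpace Y] : Prop :=
  ∃ (ι : Type) (f : Y → ι → ℝ), Topology.IsClosedEmbedding f

def hewitt (X : Type) [TopologicalSpace X] : Set (StoneCech X) :=
  ⋂₀ {C : Set (StoneCech X) |
      (∃ f : StoneCech X → ℝ, Continuous f ∧ C = {x | f x ≠ 0}) ∧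
        Set.range (stoneCechUnit : X → StoneCech X) ⊆ C}

/-!
`υX` is the common nonvanishing locus in `βX` of the `f ∈ C(βX)` without zeros on `X`; such a
locus is homeomorphic to the closed graph of the reciprocals `1 / f`, so every `K ∩ υX` with
`K ⊆ βX` closed is realcompact.

If a closed neighbourhood `C` of `x` in `βX` misses `cl (υX \ X)`, take `U = X ∩ int C`: then
`cl_X U` is homeomorphic to `cl_{βX} U ∩ υX`, hence realcompact.

Conversely, let `φ : cl U → ℝ^ι` be a closed embedding and `k` a function on `βX` with `k x ≠ 0`
and support in `U`. Every continuous real function on `X` extends continuously over `υX`, in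
particular each `k · φ i`. So at `q ∈ υX` with `k q ≠ 0` the map `φ` converges along the trace
of `𝓝 q` on `U`; the limit lies in the closed image of `φ`, and its preimage is a point of `X`
mapped to `q`. Hence the neighbourhood `{k ≠ 0}` of `x` does not meet `υX \ X`.
-/

open Topology Filter Set Real

namespace IsRealcompactSpace

variable {Y Z : Type} [TopologicalSpace Y] [TopologicalSpace Z]

lemma of_isClosedEmbedding (hZ : IsRealcompactSpace Z) {g : Y → Z} (hg : IsClosedEmbedding g) :
    IsRealcompactSpace Y := by
  obtain ⟨ι, f, hf⟩ := hZ
  exact ⟨ι, f ∘ g, hf.comp hg⟩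

lemma prod_pi (hY : IsRealcompactSpace Y) (S : Type) : IsRealcompactSpace (Y × (S → ℝ)) := by
  obtain ⟨ι, f, hf⟩ := hY
  exact ⟨ι ⊕ S, Homeomorph.sumArrowHomeomorphProdArrow.symm ∘ Prod.map f id,
    Homeomorph.sumArrowHomeomorphProdArrow.symm.isClosedEmbedding.comp
      (hf.prodMap IsClosedEmbedding.id)⟩

lemma of_compactSpace [CompactSpace Y] [T2Space Y] : IsRealcompactSpace Y := by
  refine ⟨C(Y, ℝ), fun y g => g y,
    Continuous.isClosedEmbedding (continuous_pi fun g => g.continuous) fun p q hpq => ?_⟩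
  by_contra hne
  obtain ⟨g, hgp, hgq, -⟩ := exists_continuous_zero_one_of_isClosed isClosed_singleton
    isClosed_singleton (disjoint_singleton.2 hne)
  have : g p = g q := congrFun hpq g
  simp [hgp (mem_singleton p), hgq (mem_singleton q)] at this

lemma inter_nonvanishing (hY : IsRealcompactSpace Y) {K : Set Y} (hK : IsClosed K)
    (S : Set C(Y, ℝ)) : IsRealcompactSpace ↥(K ∩ {y | ∀ f ∈ S, f y ≠ 0}) := by
  set Φ : ↥(K ∩ {y | ∀ f ∈ S, f y ≠ 0}) → Y × (S → ℝ) := fun m => (m.1, fun f => (f.1 m.1)⁻¹)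
  have hΦ : Continuous Φ := continuous_subtype_val.prodMk <| continuous_pi fun f =>
    (f.1.continuous.comp continuous_subtype_val).inv₀ fun m => m.2.2 f.1 f.2
  have hrange : range Φ = Prod.fst ⁻¹' K ∩ ⋂ f : S, {p : Y × (S → ℝ) | f.1 p.1 * p.2 f = 1} := by
    ext ⟨y, t⟩
    simp only [mem_inter_iff, mem_preimage, mem_iInter, mem_ofPred_eq]
    constructor
    · rintro ⟨m, hm⟩
      simp only [Φ, Prod.mk.injEq] at hm
      obtain ⟨rfl, rfl⟩ := hm
      exact ⟨m.2.1, fun f => mul_inv_cancel₀ (m.2.2 f.1 f.2)⟩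
    · rintro ⟨hyK, hyt⟩
      refine ⟨⟨y, hyK, fun f hf => left_ne_zero_of_mul_eq_one (hyt ⟨f, hf⟩)⟩, ?_⟩
      simp only [Φ, Prod.mk.injEq, true_and]
      exact funext fun f => (eq_inv_of_mul_eq_one_right (hyt f)).symm
  have hclosed : IsClosed (Prod.fst ⁻¹' K ∩ ⋂ f : S, {p : Y × (S → ℝ) | f.1 p.1 * p.2 f = 1}) :=
    (hK.preimage continuous_fst).inter <| isClosed_iInter fun f =>
      isClosed_eq ((f.1.continuous.comp continuous_fst).mul
        ((continuous_apply f).comp continuous_snd)) continuous_const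
  refine (hY.prod_pi S).of_isClosedEmbedding ⟨⟨IsInducing.of_comp hΦ continuous_fst
    IsInducing.subtypeVal, fun m m' h => Subtype.ext (congrArg Prod.fst h)⟩, hrange ▸ hclosed⟩

end IsRealcompactSpace

section Hewitt

variable {X : Type} [TopologicalSpace X]

lemma mem_hewitt_iff {p : StoneCech X} : p ∈ hewitt X ↔
    ∀ f : C(StoneCech X, ℝ), (∀ x, f (stoneCechUnit x) ≠ 0) → f p ≠ 0 := by
  refine ⟨fun h f hf => mem_sInter.1 h {p | f p ≠ 0}
    ⟨⟨f, f.continuous, rfl⟩, range_subset_iff.2 hf⟩, ?_⟩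
  rintro h C ⟨⟨f, hf, rfl⟩, hsub⟩
  exact h ⟨f, hf⟩ fun x => hsub ⟨x, rfl⟩

lemma stoneCechUnit_mem_hewitt (x : X) : stoneCechUnit x ∈ hewitt X :=
  mem_hewitt_iff.2 fun _ hf => hf x

lemma isRealcompactSpace_inter_hewitt {K : Set (StoneCech X)} (hK : IsClosed K) :
    IsRealcompactSpace ↥(K ∩ hewitt X) := by
  have hewitt_eq : hewitt X =
      {p | ∀ f ∈ {f : C(StoneCech X, ℝ) | ∀ x, f (stoneCechUnit x) ≠ 0}, f p ≠ 0} :=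
    ext fun _ => mem_hewitt_iff
  rw [hewitt_eq]
  exact IsRealcompactSpace.of_compactSpace.inter_nonvanishing hK _

/-- Compose with `arctan`, extend to `βX`, and undo with `tan`: the extension stays finite on
`hewitt X` because `cos ∘ F` is a continuous function on `βX` that does not vanish on `X`. -/
lemma exists_continuousOn_hewitt_extension {g : X → ℝ} (hg : Continuous g) :
    ∃ G : StoneCech X → ℝ, ContinuousOn G (hewitt X) ∧ ∀ x, G (stoneCechUnit x) = g x := by
  set b : X → Icc (-(π / 2)) (π / 2) :=
    fun x => ⟨arctan (g x), mem_Icc_of_Ioo (arctan_mem_Ioo (g x))⟩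
  have hb : Continuous b := (continuous_arctan.comp hg).subtype_mk _
  set F : StoneCech X → ℝ := Subtype.val ∘ stoneCechExtend hb
  have hF : Continuous F := continuous_subtype_val.comp (continuous_stoneCechExtend hb)
  have hFx (x : X) : F (stoneCechUnit x) = arctan (g x) := by
    simp [F, stoneCechExtend_stoneCechUnit, b]
  have hcos (p : StoneCech X) (hp : p ∈ hewitt X) : cos (F p) ≠ 0 :=
    mem_hewitt_iff.1 hp ⟨_, continuous_cos.comp hF⟩ fun x => by
      simpa [hFx] using (cos_arctan_pos (g x)).ne'
  refine ⟨fun p => tan (F p), fun p hp => ?_, fun x => by simp [hFx]⟩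
  exact ((continuousAt_tan.2 (hcos p hp)).comp hF.continuousAt).continuousWithinAt

end Hewitt

lemma Topology.IsClosedEmbedding.exists_tendsto_of_tendsto_comp {Y Z ι : Type*}
    [TopologicalSpace Y] [TopologicalSpace Z] {f : Y → Z} (hf : IsClosedEmbedding f)
    {u : ι → Y} {l : Filter ι} [l.NeBot] {z : Z} (h : Tendsto (f ∘ u) l (𝓝 z)) :
    ∃ y, Tendsto u l (𝓝 y) := by
  obtain ⟨y, rfl⟩ : z ∈ range f := hf.isClosed_range.closure_subset
    (mem_closure_of_tendsto h (Eventually.of_forall fun _ => mem_range_self _))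
  exact ⟨y, hf.tendsto_nhds_iff.2 h⟩

section StoneCech

variable {X : Type} [TopologicalSpace X]

open Classical in
lemma continuous_dite_mul {A : Set X} {k : X → ℝ} (hk : Continuous k)
    (hkA : tsupport k ⊆ interior A) {φ : A → ℝ} (hφ : Continuous φ) :
    Continuous fun y => if h : y ∈ A then k y * φ ⟨y, h⟩ else 0 := by
  set g : X → ℝ := fun y => if h : y ∈ A then k y * φ ⟨y, h⟩ else 0
  have hg : tsupport g ⊆ tsupport k := closure_mono fun y hy => by
    by_cases h : y ∈ A
    · exact left_ne_zero_of_mul (by simpa [g, h] using hy)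
    · simp [g, h] at hy
  refine continuous_of_tsupport fun y hy => ?_
  have hyA := hkA (hg hy)
  refine ContinuousWithinAt.continuousAt ?_ (mem_interior_iff_mem_nhds.1 hyA)
  rw [continuousWithinAt_iff_continuousAt_domRestrict _ (interior_subset hyA)]
  have hrestrict : A.domRestrict g = fun z : A => k z * φ z := funext fun z => dif_pos z.2
  rw [hrestrict]
  exact ((hk.comp continuous_subtype_val).mul hφ).continuousAt

theorem mem_range_stoneCechUnit_of_mem_hewitt {A : Set X} (hA : IsRealcompactSpace A)
    {K : StoneCech X → ℝ} (hK : Continuous K) (hKA : tsupport (K ∘ stoneCechUnit) ⊆ interior A)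
    {q : StoneCech X} (hq : q ∈ hewitt X) (hKq : K q ≠ 0) : q ∈ range stoneCechUnit := by
  obtain ⟨ι, φ, hφ⟩ := hA
  set e : X → StoneCech X := stoneCechUnit
  set k := K ∘ e
  choose G hG hGe using fun i => exists_continuousOn_hewitt_extension
    (continuous_dite_mul (hK.comp continuous_stoneCechUnit) hKA
      ((continuous_apply i).comp hφ.continuous))
  set l := comap e (𝓝 q)
  have hl : l.NeBot := comap_neBot fun t ht => by
    obtain ⟨o, hot, ho, hqo⟩ := mem_nhds_iff.1 ht
    obtain ⟨x, hx⟩ := denseRange_stoneCechUnit.exists_mem_open ho ⟨q, hqo⟩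
    exact ⟨x, hot hx⟩
  have hel : Tendsto e l (𝓝[hewitt X] q) :=
    tendsto_nhdsWithin_iff.2 ⟨tendsto_comap, Eventually.of_forall stoneCechUnit_mem_hewitt⟩
  have hkl : Tendsto k l (𝓝 (K q)) := (hK.tendsto q).comp tendsto_comap
  have hkne : ∀ᶠ y in l, k y ≠ 0 := hkl.eventually_ne hKq
  have hAl : A ∈ l := mem_of_superset hkne fun y hy =>
    interior_subset (hKA (subset_tsupport _ hy))
  set lA := comap ((↑) : A → X) l
  have : lA.NeBot := hl.comap_of_range_mem (by rwa [Subtype.range_coe])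
  have hφl : Tendsto φ lA (𝓝 fun i => G i q / K q) := by
    refine tendsto_pi_nhds.2 fun i => ?_
    have hGl : Tendsto (fun y => G i (e y)) l (𝓝 (G i q)) := (hG i q hq).tendsto.comp hel
    refine ((hGl.div hkl hKq).comp tendsto_comap).congr' ?_
    filter_upwards [tendsto_comap.eventually hkne] with a ha
    simp only [Function.comp_apply, e, hGe, Pi.div_apply, dif_pos a.2]
    exact mul_div_cancel_left₀ _ ha
  obtain ⟨a, ha⟩ := hφ.exists_tendsto_of_tendsto_comp (u := id) hφl
  have hea : Tendsto (e ∘ (↑)) lA (𝓝 (e a)) :=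
    ((continuous_stoneCechUnit.comp continuous_subtype_val).tendsto a).comp ha
  exact ⟨a, tendsto_nhds_unique hea (tendsto_comap.comp tendsto_comap)⟩

lemma exists_continuous_stoneCech_tsupport_subset [CompletelyRegularSpace X] {U : Set X}
    (hU : IsOpen U) {x : X} (hx : x ∈ U) : ∃ K : StoneCech X → ℝ,
      Continuous K ∧ K (stoneCechUnit x) ≠ 0 ∧ tsupport (K ∘ stoneCechUnit) ⊆ U := by
  obtain ⟨f, hf, hfx, hfU⟩ :=
    CompletelyRegularSpace.completely_regular x Uᶜ hU.isClosed_compl (not_not.2 hx)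
  set F : StoneCech X → ℝ := Subtype.val ∘ stoneCechExtend hf
  have hFe (y : X) : F (stoneCechUnit y) = f y := by simp [F, stoneCechExtend_stoneCechUnit]
  refine ⟨fun p => max (1 / 2 - F p) 0, ((continuous_const.sub
    (continuous_subtype_val.comp (continuous_stoneCechExtend hf))).max continuous_const),
    by simp [hFe, hfx], ?_⟩
  have hsupp : tsupport ((fun p => max (1 / 2 - F p) 0) ∘ stoneCechUnit) ⊆
      {y | (f y : ℝ) ≤ 1 / 2} := by
    refine closure_minimal (fun y hy => ?_)
      (isClosed_le (continuous_subtype_val.comp hf) continuous_const)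
    by_contra hy'
    exact hy (by simp only [mem_ofPred_eq, not_le] at hy'; simp [hFe]; linarith)
  refine hsupp.trans fun y hy => ?_
  by_contra hyU
  have : (f y : ℝ) ≤ 1 / 2 := hy
  norm_num [hfU hyU] at this

lemma isRealcompactSpace_closure_of_image_subset [T35Space X] {C : Set (StoneCech X)}
    (hC : IsClosed C) (hCX : C ∩ hewitt X ⊆ range stoneCechUnit) {U : Set X}
    (hU : stoneCechUnit '' U ⊆ C) : IsRealcompactSpace (closure U) := by
  set K := closure (stoneCechUnit '' U)
  have hclU : closure U = stoneCechUnit ⁻¹' K :=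
    isInducing_stoneCechUnit.closure_eq_preimage_closure_image U
  set ψ := codRestrict (stoneCechUnit ∘ ((↑) : closure U → X)) (K ∩ hewitt X)
    fun y => ⟨hclU.le y.2, stoneCechUnit_mem_hewitt y.1⟩
  have hψ_surj : Function.Surjective ψ := by
    rintro ⟨p, hpK, hpH⟩
    obtain ⟨y, rfl⟩ := hCX ⟨closure_minimal hU hC hpK, hpH⟩
    exact ⟨⟨y, hclU.ge hpK⟩, rfl⟩
  have hψ_emb : IsClosedEmbedding ψ :=
    ⟨(isEmbedding_stoneCechUnit.comp IsEmbedding.subtypeVal).codRestrict _ _,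
      hψ_surj.range_eq ▸ isClosed_univ⟩
  exact (isRealcompactSpace_inter_hewitt isClosed_closure).of_isClosedEmbedding hψ_emb

end StoneCech

/-- `X` is locally realcompact iff
`X ⊆ βX \ cl_{βX}(υX \ X)`. -/
theorem stmt1 (X : Type) [TopologicalSpace X] [T35Space X] :
    (∀ x : X, ∃ U : Set X, IsOpen U ∧ x ∈ U ∧ IsRealcompactSpace (closure U)) ↔
      Set.range (stoneCechUnit : X → StoneCech X) ⊆
        (closure (hewitt X \ Set.range (stoneCechUnit : X → StoneCech X)))ᶜ := by
  constructor
  · rintro h _ ⟨x, rfl⟩ hx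
    obtain ⟨U, hU, hxU, hUreal⟩ := h x
    obtain ⟨K, hK, hKx, hKU⟩ := exists_continuous_stoneCech_tsupport_subset hU hxU
    obtain ⟨q, hKq, hqH, hqX⟩ :=
      mem_closure_iff.1 hx {p | K p ≠ 0} (isOpen_ne_fun hK continuous_const) hKx
    exact hqX (mem_range_stoneCechUnit_of_mem_hewitt hUreal hK
      (hKU.trans (hU.subset_interior_iff.2 subset_closure)) hqH hKq)
  · intro h x
    obtain ⟨C, hC, hCclosed, hCD⟩ := exists_mem_nhds_isClosed_subset
      (isClosed_closure.isOpen_compl.mem_nhds (h ⟨x, rfl⟩))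
    refine ⟨stoneCechUnit ⁻¹' interior C, isOpen_interior.preimage continuous_stoneCechUnit,
      mem_interior_iff_mem_nhds.2 hC, isRealcompactSpace_closure_of_image_subset hCclosed
        (fun p hp => ?_) ((image_preimage_subset _ _).trans interior_subset)⟩
    by_contra hpX
    exact hCD hp.1 (subset_closure ⟨hp.2, hpX⟩)
end

section
/- Let P be the Lindelöf property and define λ_P X = ⋃ { int_{βX} cl_{βX} C : C a cozero-set of X with cl_X C Lindelöf }. For X the topological sum of pairwise disjoint copies R_i = [0,∞) indexed by i < ω₁, one has λ_P X = ⋃ { cl_{βX}(⋃_{i∈J} R_i) : J ⊆ ω₁ countable }. -/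
/-- A cozero-set of a space. -/
def IsCoz {X : Type} [TopologicalSpace X] (C : Set X) : Prop :=
  ∃ f : X → ℝ, Continuous f ∧ C = {x | f x ≠ 0}

/-- The closure in `βX` of the image of a clopen set is open. -/
lemma isOpen_closure_image_of_isClopen {α : Type} [TopologicalSpace α] {C : Set α}
    (hC : IsClopen C) : IsOpen (closure (stoneCechUnit '' C)) := by
  classical
  have hg : Continuous C.boolIndicator := (continuous_boolIndicator_iff_isClopen C).2 hC
  set G := stoneCechExtend hg with hGdef
  have hGc : Continuous G := continuous_stoneCechExtend hg
  have hext : ∀ x : α, G (stoneCechUnit x) = C.boolIndicator x := fun x =>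
    congrFun (stoneCechExtend_extends hg) x
  have key : closure (stoneCechUnit '' C) = G ⁻¹' {true} := by
    apply Set.Subset.antisymm
    · apply closure_minimal
      · rintro _ ⟨x, hx, rfl⟩
        simp only [Set.mem_preimage, Set.mem_singleton_iff, hext]
        exact (C.mem_iff_boolIndicator x).1 hx
      · exact (isClosed_singleton.preimage hGc)
    · intro y hy
      by_contra hmem
      have h1 : y ∈ closure (stoneCechUnit '' C) ∪ closure (stoneCechUnit '' Cᶜ) := by
        have : y ∈ closure (Set.range (stoneCechUnit : α → StoneCech α)) :=
          denseRange_stoneCechUnit y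
        have hsplit : Set.range (stoneCechUnit : α → StoneCech α) =
            stoneCechUnit '' C ∪ stoneCechUnit '' Cᶜ := by
          rw [← Set.image_union, Set.union_compl_self, Set.image_univ]
        rw [hsplit, closure_union] at this
        exact this
      have h2 : y ∈ closure (stoneCechUnit '' Cᶜ) := h1.resolve_left hmem
      have h3 : closure (stoneCechUnit '' Cᶜ) ⊆ G ⁻¹' {false} := by
        apply closure_minimal
        · rintro _ ⟨x, hx, rfl⟩
          simp only [Set.mem_preimage, Set.mem_singleton_iff, hext]
          exact (C.notMem_iff_boolIndicator x).1 hx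
        · exact isClosed_singleton.preimage hGc
      have := h3 h2
      simp only [Set.mem_preimage, Set.mem_singleton_iff] at this hy
      rw [hy] at this
      exact absurd this (by decide)
  rw [key]
  exact (isOpen_discrete ({true} : Set Bool)).preimage hGc

/-- for `X = ⊕_{i<ω₁} [0,∞)` and `P` the Lindelöf property,
`λ_P X = ⋃ { cl_{βX}(⋃_{i∈J} R_i) : J countable }`. -/
theorem stmt5 (ι : Type) (hι : Cardinal.mk ι = Cardinal.aleph 1) :
    (⋃₀ {V : Set (StoneCech (Σ _ : ι, NNReal)) |
        ∃ C : Set (Σ _ : ι, NNReal), IsCoz C ∧ IsLindelof (closure C) ∧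
          V = interior (closure (stoneCechUnit '' C))}) =
      ⋃ J ∈ {J : Set ι | J.Countable},
        closure (stoneCechUnit '' {p : (Σ _ : ι, NNReal) | p.1 ∈ J}) := by
  classical
  apply Set.Subset.antisymm
  · rintro x ⟨V, ⟨C, -, hLin, rfl⟩, hxV⟩
    -- The Lindelöf closure of `C` meets only countably many summands.
    obtain ⟨J, hJc, hJcov⟩ := hLin.elim_countable_subcover
      (fun i : ι => Set.range (Sigma.mk i)) (fun i => isOpenMap_sigmaMk.isOpen_range)
      (by
        intro p _
        exact Set.mem_iUnion.2 ⟨p.1, ⟨p.2, Sigma.eta p⟩⟩)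
    have hCsub : C ⊆ {p : (Σ _ : ι, NNReal) | p.1 ∈ J} := by
      intro p hp
      obtain ⟨i, hiJ, hpi⟩ := Set.mem_iUnion₂.1 (hJcov (subset_closure hp))
      obtain ⟨y, rfl⟩ := hpi
      exact hiJ
    refine Set.mem_iUnion₂.2 ⟨J, hJc, ?_⟩
    have : interior (closure (stoneCechUnit '' C)) ⊆
        closure (stoneCechUnit '' {p : (Σ _ : ι, NNReal) | p.1 ∈ J}) :=
      interior_subset.trans (closure_mono (Set.image_mono hCsub))
    exact this hxV
  · intro x hx
    obtain ⟨J, hJc, hxJ⟩ := Set.mem_iUnion₂.1 hx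
    set S : Set (Σ _ : ι, NNReal) := {p | p.1 ∈ J} with hS
    have hclopen : IsClopen S := by
      constructor
      · rw [isClosed_sigma_iff]
        intro i
        by_cases h : i ∈ J <;> simp [hS, Set.preimage, h]
      · rw [isOpen_sigma_iff]
        intro i
        by_cases h : i ∈ J <;> simp [hS, Set.preimage, h]
    have hcoz : IsCoz S := by
      refine ⟨fun p => if p.1 ∈ J then 1 else 0, ?_, ?_⟩
      · apply continuous_sigma
        intro i
        by_cases h : i ∈ J <;> simp only [Function.comp, h, if_true, if_false] <;>
          exact continuous_const
      · ext p
        by_cases h : p.1 ∈ J <;> simp [hS, h]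
    have hLin : IsLindelof (closure S) := by
      rw [hclopen.1.closure_eq]
      have hSeq : S = ⋃ i ∈ J, Set.range (Sigma.mk i) := by
        ext p
        simp only [hS, Set.mem_setOf_eq, Set.mem_iUnion, Set.mem_range]
        constructor
        · intro h; exact ⟨p.1, h, p.2, Sigma.eta p⟩
        · rintro ⟨i, hi, y, rfl⟩; exact hi
      rw [hSeq]
      exact hJc.isLindelof_biUnion fun i _ => by
        rw [← Set.image_univ]
        exact isLindelof_univ.image continuous_sigmaMk
    refine ⟨interior (closure (stoneCechUnit '' S)), ⟨S, hcoz, hLin, rfl⟩, ?_⟩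
    have hopen : IsOpen (closure (stoneCechUnit '' S)) :=
      isOpen_closure_image_of_isClopen hclopen
    rw [hopen.interior_eq]
    exact hxJ
end

section
/- Let X = ⊕_{i<ω₁}[0,∞) and let λ be the union of the closures in βX of the countable subsums of X. Then for every uncountable J ⊆ ω₁ the set cl_{βX}(⋃_{i∈J} R_i) is not contained in λ. -/
open Classical in
theorem subsumInd_continuous (ι : Type) (K : Set ι) :
    Continuous (fun p : (Σ _ : ι, NNReal) => if p.1 ∈ K then true else false) :=
  continuous_sigma fun i => by
    show Continuous fun _ : NNReal => if i ∈ K then true else false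
    exact continuous_const

open Classical in
/-- The Bool-valued indicator of the clopen subsum `⋃_{i∈K} R_i`, extended to `βX`. -/
noncomputable def subsumExt (ι : Type) (K : Set ι) : StoneCech (Σ _ : ι, NNReal) → Bool :=
  stoneCechExtend (subsumInd_continuous ι K)

open Classical in
theorem subsumExt_unit (ι : Type) (K : Set ι) (p : Σ _ : ι, NNReal) :
    subsumExt ι K (stoneCechUnit p) = if p.1 ∈ K then true else false :=
  congrFun (stoneCechExtend_extends (subsumInd_continuous ι K)) p

/-- for `X = ⊕_{i<ω₁} [0,∞)` and `λ` the union of the closures in `βX`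
of the countable subsums, for every uncountable `J ⊆ ω₁` the set
`cl_{βX}(⋃_{i∈J} R_i)` is not contained in `λ`. -/
theorem stmt6 (ι : Type) (hι : Cardinal.mk ι = Cardinal.aleph 1)
    (J : Set ι) (hJ : ¬ J.Countable) :
    ¬ closure (stoneCechUnit '' {p : (Σ _ : ι, NNReal) | p.1 ∈ J}) ⊆
        ⋃ K ∈ {K : Set ι | K.Countable},
          closure (stoneCechUnit '' {p : (Σ _ : ι, NNReal) | p.1 ∈ K}) := by
  classical
  intro hsub
  set X := (Σ _ : ι, NNReal)
  -- the compact set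
  have hC : IsCompact (closure (stoneCechUnit '' {p : X | p.1 ∈ J})) :=
    isClosed_closure.isCompact
  -- open sets covering it
  set V : {K : Set ι // K.Countable} → Set (StoneCech X) :=
    fun K => (subsumExt ι K.1) ⁻¹' {true} with hV
  have hVopen : ∀ K, IsOpen (V K) := fun K =>
    (isOpen_discrete _).preimage (continuous_stoneCechExtend (subsumInd_continuous ι K.1))
  have hVclosed : ∀ K, IsClosed (V K) := fun K =>
    (isClosed_discrete _).preimage (continuous_stoneCechExtend (subsumInd_continuous ι K.1))
  have hcl : ∀ K : {K : Set ι // K.Countable},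
      closure (stoneCechUnit '' {p : X | p.1 ∈ K.1}) ⊆ V K := by
    intro K
    apply closure_minimal _ (hVclosed K)
    rintro _ ⟨p, hp, rfl⟩
    show subsumExt ι K.1 (stoneCechUnit p) ∈ ({true} : Set Bool)
    rw [subsumExt_unit]
    have hp' : p.1 ∈ K.1 := hp
    simp [if_pos hp']
  have hcover : closure (stoneCechUnit '' {p : X | p.1 ∈ J}) ⊆ ⋃ K, V K := by
    intro x hx
    obtain ⟨S, ⟨K, rfl⟩, hS⟩ := hsub hx
    simp only [Set.mem_iUnion] at hS
    obtain ⟨hKc, hxS⟩ := hS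
    exact Set.mem_iUnion.2 ⟨⟨K, hKc⟩, hcl ⟨K, hKc⟩ hxS⟩
  obtain ⟨t, ht⟩ := hC.elim_finite_subcover V hVopen hcover
  -- the union of the finitely many countable sets
  set K₀ : Set ι := ⋃ K ∈ t, K.1 with hK₀
  have hK₀c : K₀.Countable := Set.Countable.biUnion t.countable_toSet fun K _ => K.2
  have hJK : ¬ J ⊆ K₀ := fun h => hJ (hK₀c.mono h)
  obtain ⟨j, hjJ, hjK⟩ := Set.not_subset.1 hJK
  have hmem : stoneCechUnit (⟨j, 0⟩ : X) ∈ closure (stoneCechUnit '' {p : X | p.1 ∈ J}) :=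
    subset_closure ⟨⟨j, 0⟩, hjJ, rfl⟩
  obtain ⟨K, hKt, hKV⟩ := Set.mem_iUnion₂.1 (ht hmem)
  have : subsumExt ι K.1 (stoneCechUnit (⟨j, 0⟩ : X)) = true := hKV
  rw [subsumExt_unit] at this
  have hjK' : (⟨j, (0:NNReal)⟩ : X).1 ∉ K.1 := fun h =>
    hjK (Set.mem_biUnion hKt h)
  simp [if_neg hjK'] at this
end

section
/- Let X be a Tychonoff space and P a topological property that is closed hereditary and preserved under finite closed sums. Define λ_P X = ⋃ { int_{βX} cl_{βX} C : C cozero in X, cl_X C has P }. Then λ_P X = βX if and only if X has P. -/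
/-- `λ_P X`, for a topological property `P`. -/
def lambdaP (P : (Y : Type) → [TopologicalSpace Y] → Prop)
    (X : Type) [TopologicalSpace X] : Set (StoneCech X) :=
  ⋃₀ {V : Set (StoneCech X) |
      ∃ C : Set X, IsCoz C ∧ P ↥(closure C) ∧
        V = interior (closure (stoneCechUnit '' C))}

open unitInterval in
lemma mem_closure_of_unit_mem {X : Type} [TopologicalSpace X] [T35Space X]
    {C : Set X} {x : X} (h : stoneCechUnit x ∈ closure (stoneCechUnit '' C)) :
    x ∈ closure C := by
  by_contra hx
  obtain ⟨f, fc, fx, fK⟩ := CompletelyRegularSpace.completely_regular x (closure C)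
    isClosed_closure hx
  let F : StoneCech X → I := stoneCechExtend fc
  have hF : F ∘ stoneCechUnit = f := stoneCechExtend_extends fc
  have hsub : closure (stoneCechUnit '' C) ⊆ F ⁻¹' {1} := by
    apply closure_minimal
    · rintro _ ⟨c, hc, rfl⟩
      have : F (stoneCechUnit c) = f c := congrFun hF c
      simp only [Set.mem_preimage, Set.mem_singleton_iff, this]
      exact fK (subset_closure hc)
    · exact (isClosed_singleton).preimage (continuous_stoneCechExtend fc)
  have h1 : F (stoneCechUnit x) = 1 := hsub h
  have h0 := congrFun hF x
  simp only [Function.comp_apply] at h0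
  rw [h0, fx] at h1
  exact zero_ne_one h1

/-- for a topological property `P` that is closed hereditary and preserved
under finite closed sums, `λ_P X = βX` iff `X` has `P`. -/
theorem stmt7 (P : (Y : Type) → [TopologicalSpace Y] → Prop)
    (hinv : ∀ (Y Z : Type) [TopologicalSpace Y] [TopologicalSpace Z],
      Y ≃ₜ Z → P Y → P Z)
    (hclosed : ∀ (Y : Type) [TopologicalSpace Y] (A : Set Y),
      IsClosed A → P Y → P ↥A)
    (hsum : ∀ (Y : Type) [TopologicalSpace Y] (n : ℕ) (A : Fin n → Set Y),
      (∀ i, IsClosed (A i)) → (∀ i, P ↥(A i)) → (⋃ i, A i) = Set.univ → P Y)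
    (X : Type) [TopologicalSpace X] [T35Space X] :
    lambdaP P X = Set.univ ↔ P X := by
  constructor
  · intro hl
    -- compactness: extract a finite subcover
    set S := {V : Set (StoneCech X) |
      ∃ C : Set X, IsCoz C ∧ P ↥(closure C) ∧
        V = interior (closure (stoneCechUnit '' C))} with hS
    have hcov : (Set.univ : Set (StoneCech X)) ⊆ ⋃ V : S, (V : Set (StoneCech X)) := by
      rw [← hl]
      intro x hx
      obtain ⟨V, hV, hxV⟩ := hx
      exact Set.mem_iUnion.2 ⟨⟨V, hV⟩, hxV⟩
    have hopen : ∀ V : S, IsOpen (V : Set (StoneCech X)) := by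
      rintro ⟨V, C, hC, hP, rfl⟩
      exact isOpen_interior
    obtain ⟨t, ht⟩ := isCompact_univ.elim_finite_subcover _ hopen hcov
    -- choose cozero sets for each member of t
    classical
    have hch : ∀ V : S, ∃ C : Set X, P ↥(closure C) ∧
        (V : Set (StoneCech X)) ⊆ closure (stoneCechUnit '' C) := by
      rintro ⟨V, C, hC, hP, rfl⟩
      exact ⟨C, hP, interior_subset⟩
    choose Cf hCf1 hCf2 using hch
    let e := t.equivFin
    refine hsum X t.card (fun i => closure (Cf (e.symm i))) (fun i => isClosed_closure)
      (fun i => hCf1 _) ?_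
    apply Set.eq_univ_of_forall
    intro x
    have : stoneCechUnit x ∈ ⋃ V ∈ t, (V : Set (StoneCech X)) := ht (Set.mem_univ _)
    obtain ⟨V, hVt, hxV⟩ := Set.mem_iUnion₂.1 this
    refine Set.mem_iUnion.2 ⟨e ⟨V, hVt⟩, ?_⟩
    have hx' : stoneCechUnit x ∈ closure (stoneCechUnit '' Cf V) := hCf2 V hxV
    have := mem_closure_of_unit_mem hx'
    simpa using this
  · intro hP
    apply Set.eq_univ_of_univ_subset
    apply Set.subset_sUnion_of_mem
    refine ⟨Set.univ, ⟨fun _ => 1, continuous_const, by simp⟩, ?_, ?_⟩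
    · rw [closure_univ]
      exact hinv X _ (Homeomorph.Set.univ X).symm hP
    · rw [Set.image_univ, denseRange_stoneCechUnit.closure_eq, interior_univ]
end

section
/- Let X be a Tychonoff space and P a topological property that is closed hereditary. Define λ_P X as the union of int_{βX} cl_{βX} C over cozero-sets C of X with cl_X C having P. Then X ⊆ λ_P X if and only if X is locally-P (every point has an open neighborhood in X whose closure has P). -/
open Set

def subHomeo {X : Type} [TopologicalSpace X] {s t : Set X} (hst : s ⊆ t) :
    (Subtype.val ⁻¹' s : Set ↥t) ≃ₜ ↥s where
  toFun a := ⟨a.1.1, a.2⟩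
  invFun b := ⟨⟨b.1, hst b.2⟩, b.2⟩
  left_inv _ := rfl
  right_inv _ := rfl
  continuous_toFun := Continuous.subtype_mk (continuous_subtype_val.comp continuous_subtype_val) _
  continuous_invFun := Continuous.subtype_mk (Continuous.subtype_mk continuous_subtype_val _) _

lemma aux_closed_sub (P : (Y : Type) → [TopologicalSpace Y] → Prop)
    (hinv : ∀ (Y Z : Type) [TopologicalSpace Y] [TopologicalSpace Z],
      Y ≃ₜ Z → P Y → P Z)
    (hclosed : ∀ (Y : Type) [TopologicalSpace Y] (A : Set Y),
      IsClosed A → P Y → P ↥A)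
    {X : Type} [TopologicalSpace X] {s t : Set X} (hst : s ⊆ t)
    (hs : IsClosed s) (hPt : P ↥t) : P ↥s :=
  hinv _ _ (subHomeo hst) (hclosed _ _ (hs.preimage continuous_subtype_val) hPt)

/-- for a closed-hereditary topological property `P`,
`X ⊆ λ_P X` iff `X` is locally-`P`. -/
theorem stmt8 (P : (Y : Type) → [TopologicalSpace Y] → Prop)
    (hinv : ∀ (Y Z : Type) [TopologicalSpace Y] [TopologicalSpace Z],
      Y ≃ₜ Z → P Y → P Z)
    (hclosed : ∀ (Y : Type) [TopologicalSpace Y] (A : Set Y),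
      IsClosed A → P Y → P ↥A)
    (X : Type) [TopologicalSpace X] [T35Space X] :
    Set.range (stoneCechUnit : X → StoneCech X) ⊆ lambdaP P X ↔
      ∀ x : X, ∃ U : Set X, IsOpen U ∧ x ∈ U ∧ P ↥(closure U) := by
  constructor
  · intro h x
    obtain ⟨V, ⟨C, hcoz, hPC, rfl⟩, hxV⟩ := h ⟨x, rfl⟩
    refine ⟨stoneCechUnit ⁻¹' interior (closure (stoneCechUnit '' C)),
      isOpen_interior.preimage continuous_stoneCechUnit, hxV, ?_⟩
    -- key: preimage of closure ⊆ closure C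
    have hkey : stoneCechUnit ⁻¹' closure (stoneCechUnit '' C) ⊆ closure C := by
      intro y hy
      by_contra hyc
      obtain ⟨f, hf, hf0, hf1⟩ :=
        CompletelyRegularSpace.completely_regular y (closure C) isClosed_closure hyc
      have hext := stoneCechExtend_extends hf
      have h1 : ∀ p ∈ closure (stoneCechUnit '' C), stoneCechExtend hf p = 1 := by
        intro p hp
        have : closure (stoneCechUnit '' C) ⊆ {p | stoneCechExtend hf p = 1} := by
          apply closure_minimal
          · rintro _ ⟨c, hc, rfl⟩
            have : f c = 1 := hf1 (subset_closure hc)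
            calc stoneCechExtend hf (stoneCechUnit c)
                = f c := congrFun hext c
              _ = 1 := this
          · exact isClosed_eq (continuous_stoneCechExtend hf) continuous_const
        exact this hp
      have h0 : stoneCechExtend hf (stoneCechUnit y) = 0 := (congrFun hext y).trans hf0
      have := h1 _ hy
      rw [h0] at this
      exact zero_ne_one this
    have hsub : closure (stoneCechUnit ⁻¹' interior (closure (stoneCechUnit '' C))) ⊆ closure C := by
      apply closure_minimal _ isClosed_closure
      intro y hy
      have : stoneCechUnit y ∈ closure (stoneCechUnit '' C) := interior_subset hy
      exact hkey this
    exact aux_closed_sub P hinv hclosed hsub isClosed_closure hPC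
  · intro h
    rintro _ ⟨x, rfl⟩
    obtain ⟨U, hUo, hxU, hPU⟩ := h x
    obtain ⟨f, hf, hf0, hf1⟩ :=
      CompletelyRegularSpace.completely_regular x Uᶜ hUo.isClosed_compl (by simp [hxU])
    set C : Set X := {y | (f y : ℝ) < 1/2} with hC
    have hcoz : IsCoz C := by
      refine ⟨fun y => max (1/2 - (f y : ℝ)) 0, by fun_prop, ?_⟩
      ext y
      simp only [hC, mem_setOf_eq, ne_eq]
      constructor
      · intro hy
        have h1 : (0:ℝ) < 1/2 - f y := by linarith
        rw [max_eq_left h1.le]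
        linarith
      · intro hy
        by_contra hle
        push_neg at hle
        exact hy (max_eq_right (by linarith))
    have hfc : Continuous (fun y => (f y : ℝ)) := continuous_subtype_val.comp hf
    have hCU : closure C ⊆ closure U := by
      have h1 : closure C ⊆ {y | (f y : ℝ) ≤ 1/2} :=
        closure_minimal (fun y hy => by
          simp only [hC, mem_setOf_eq] at hy ⊢
          linarith) (isClosed_le hfc continuous_const)
      have h2 : {y | (f y : ℝ) ≤ 1/2} ⊆ U := by
        intro y hy
        by_contra hyU
        have h1' : (f y : ℝ) = 1 := by
          have := hf1 hyU
          rw [this]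
          norm_num
        simp only [mem_setOf_eq, h1'] at hy
        linarith
      exact fun y hy => subset_closure (h2 (h1 hy))
    have hPC : P ↥(closure C) :=
      aux_closed_sub P hinv hclosed hCU isClosed_closure hPU
    -- now show stoneCechUnit x ∈ interior (closure (stoneCechUnit '' C))
    set F := stoneCechExtend hf with hF
    set O : Set (StoneCech X) := F ⁻¹' {t | (t : ℝ) < 1/2} with hO
    have hOopen : IsOpen O :=
      ((isOpen_Iio.preimage continuous_subtype_val).preimage (continuous_stoneCechExtend hf))
    have hxO : stoneCechUnit x ∈ O := by
      have : F (stoneCechUnit x) = f x := congrFun (stoneCechExtend_extends hf) x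
      simp only [hO, mem_preimage, mem_setOf_eq, this, hf0]
      norm_num
    have hOsub : O ⊆ closure (stoneCechUnit '' C) := by
      intro p hp
      rw [mem_closure_iff]
      intro o ho hpo
      obtain ⟨y, hy⟩ := denseRange_stoneCechUnit.exists_mem_open (ho.inter hOopen) ⟨p, hpo, hp⟩
      have hyC : y ∈ C := by
        have heq : F (stoneCechUnit y) = f y := congrFun (stoneCechExtend_extends hf) y
        have hlt := hy.2
        simp only [hO, mem_preimage, mem_setOf_eq, heq] at hlt
        exact hlt
      exact ⟨stoneCechUnit y, hy.1, mem_image_of_mem _ hyC⟩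
    exact ⟨_, ⟨C, hcoz, hPC, rfl⟩, interior_maximal hOsub hOopen hxO⟩
end

section
/- Let X be a Tychonoff space and A a pseudocompact regular closed subspace of X. Then cl_{υX} A is compact, and hence cl_{βX} A ⊆ υX. -/
def IsPseudocompactSpace (Y : Type) [TopologicalSpace Y] : Prop :=
  ∀ f : Y → ℝ, Continuous f → ∃ M : ℝ, ∀ y : Y, |f y| ≤ M

/-- if `A` is a pseudocompact regular closed subspace of `X`, then
`cl_{υX} A` is compact and hence `cl_{βX} A ⊆ υX`. -/
theorem stmt12 (X : Type) [TopologicalSpace X] [T35Space X] (A : Set X)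
    (hreg : ∃ U : Set X, IsOpen U ∧ A = closure U)
    (hp : IsPseudocompactSpace A) :
    IsCompact (closure (stoneCechUnit '' A) ∩ hewitt X) ∧
      closure (stoneCechUnit '' A) ⊆ hewitt X := by
  have hsub : closure (stoneCechUnit '' A) ⊆ hewitt X := by
    intro x hx C hC
    obtain ⟨⟨f, hf, rfl⟩, hrange⟩ := hC
    rcases A.eq_empty_or_nonempty with h | ⟨a0, ha0⟩
    · simp [h] at hx
    · have hne : ∀ a : A, f (stoneCechUnit (a : X)) ≠ 0 := fun a =>
        hrange ⟨(a : X), rfl⟩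
      have hg : Continuous fun a : A => (f (stoneCechUnit (a : X)))⁻¹ :=
        Continuous.inv₀ ((hf.comp continuous_stoneCechUnit).comp continuous_subtype_val) hne
      obtain ⟨M, hM⟩ := hp _ hg
      have hMpos : 0 < M :=
        lt_of_lt_of_le (abs_pos.mpr (inv_ne_zero (hne ⟨a0, ha0⟩))) (hM ⟨a0, ha0⟩)
      have hbound : ∀ y ∈ stoneCechUnit '' A, M⁻¹ ≤ |f y| := by
        rintro y ⟨a, ha, rfl⟩
        have h1 := hM ⟨a, ha⟩
        rw [abs_inv] at h1
        have h2 : 0 < |f (stoneCechUnit a)| := abs_pos.mpr (hne ⟨a, ha⟩)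
        calc M⁻¹ ≤ (|f (stoneCechUnit a)|⁻¹)⁻¹ := by
              apply inv_anti₀ (by positivity) h1
          _ = |f (stoneCechUnit a)| := inv_inv _
      have hclosed : IsClosed {y : StoneCech X | M⁻¹ ≤ |f y|} :=
        isClosed_le continuous_const hf.abs
      have hx2 : x ∈ {y : StoneCech X | M⁻¹ ≤ |f y|} :=
        closure_minimal hbound hclosed hx
      have : 0 < |f x| := lt_of_lt_of_le (by positivity) hx2
      exact abs_pos.mp this
  refine ⟨?_, hsub⟩
  rw [Set.inter_eq_left.mpr hsub]
  exact isClosed_closure.isCompact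
end

section
/- Let X be a locally compact Tychonoff space, let C be a closed (hence compact) subspace of βX \ X, let Z be the quotient of βX collapsing C to a single point p, and let Y = X ∪ {p} ⊆ Z. Then Y is locally compact if and only if C is open in βX \ X. -/
/-!
A locally compact dense subspace of a Hausdorff space is open, and an open subspace of a compact
Hausdorff space is locally compact. Hence `X` is open in `βX`, and, since `Y` is dense in the
compact Hausdorff space `Z`, `Y` is locally compact iff it is open in `Z`, iff its saturated
preimage `X ∪ C` is open in `βX`, iff (as `X` is open) `C` is open in `βX \ X`.
`Z` is Hausdorff because collapsing a closed set is a closed map, and closed continuous images of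
normal spaces are normal.
-/

open Topology Set

/-- The setoid on `α` identifying all points of `C` with each other. -/
def collapseSetoid {α : Type} (C : Set α) : Setoid α where
  r x y := x = y ∨ (x ∈ C ∧ y ∈ C)
  iseqv := by
    refine ⟨fun _ => Or.inl rfl, ?_, ?_⟩
    · rintro x y (rfl | hc)
      · exact Or.inl rfl
      · exact Or.inr ⟨hc.2, hc.1⟩
    · rintro x y z (rfl | hc) (rfl | hc')
      · exact Or.inl rfl
      · exact Or.inr hc'
      · exact Or.inr hc
      · exact Or.inr ⟨hc.1, hc'.2⟩

section DenseLocallyCompact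

variable {Z : Type*} [TopologicalSpace Z] [T2Space Z] {Y : Set Z}

theorem Dense.isOpen_of_locallyCompactSpace (hd : Dense Y) [LocallyCompactSpace Y] :
    IsOpen Y := by
  refine isOpen_iff_mem_nhds.mpr fun y hy => ?_
  obtain ⟨K, hK, hKy⟩ := exists_compact_mem_nhds (⟨y, hy⟩ : Y)
  obtain ⟨u, hu, huK⟩ := (mem_nhds_subtype Y ⟨y, hy⟩ K).mp hKy
  obtain ⟨V, hVu, hV, hyV⟩ := mem_nhds_iff.mp hu
  have hVY : V ∩ Y ⊆ (↑) '' K := fun z ⟨hzV, hzY⟩ => ⟨⟨z, hzY⟩, huK (hVu hzV), rfl⟩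
  have hVK : V ⊆ (↑) '' K :=
    calc V ⊆ closure (V ∩ Y) := hd.open_subset_closure_inter hV
      _ ⊆ closure ((↑) '' K) := closure_mono hVY
      _ = (↑) '' K := (hK.image continuous_subtype_val).isClosed.closure_eq
  exact Filter.mem_of_superset (hV.mem_nhds hyV) (hVK.trans (Subtype.coe_image_subset Y K))

theorem Dense.locallyCompactSpace_iff_isOpen [LocallyCompactSpace Z] (hd : Dense Y) :
    LocallyCompactSpace Y ↔ IsOpen Y :=
  ⟨fun _ => hd.isOpen_of_locallyCompactSpace, IsOpen.locallyCompactSpace⟩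

end DenseLocallyCompact

theorem IsClosedMap.normalSpace {X Y : Type*} [TopologicalSpace X] [TopologicalSpace Y]
    [NormalSpace X] {f : X → Y} (hf : IsClosedMap f) (hcont : Continuous f)
    (hsurj : Function.Surjective f) : NormalSpace Y where
  normal A B hA hB hAB := by
    obtain ⟨U, V, hU, hV, hAU, hBV, hUV⟩ :=
      normal_separation (hA.preimage hcont) (hB.preimage hcont) (hAB.preimage f)
    refine ⟨(f '' Uᶜ)ᶜ, (f '' Vᶜ)ᶜ, (hf _ hU.isClosed_compl).isOpen_compl,
      (hf _ hV.isClosed_compl).isOpen_compl, ?_, ?_, ?_⟩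
    · rintro a ha ⟨x, hxU, rfl⟩
      exact hxU (hAU ha)
    · rintro b hb ⟨x, hxV, rfl⟩
      exact hxV (hBV hb)
    · rw [disjoint_compl_left_iff_subset]
      intro y hy
      obtain ⟨x, rfl⟩ := hsurj y
      have hxV : x ∈ V := by_contra fun hxV => hy ⟨x, hxV, rfl⟩
      exact ⟨x, disjoint_right.mp hUV hxV, rfl⟩

theorem isQuotientMap_quotient_mk {X : Type*} [TopologicalSpace X] {s : Setoid X} :
    IsQuotientMap (Quotient.mk s) :=
  isQuotientMap_quotient_mk'

section Collapse

variable {α : Type} {C : Set α}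

open Classical in
theorem mk_preimage_image_collapse (s : Set α) :
    Quotient.mk (collapseSetoid C) ⁻¹' (Quotient.mk (collapseSetoid C) '' s) =
      if (s ∩ C).Nonempty then s ∪ C else s := by
  ext x
  have hmem : x ∈ Quotient.mk (collapseSetoid C) ⁻¹' (Quotient.mk (collapseSetoid C) '' s) ↔
      ∃ y ∈ s, y = x ∨ y ∈ C ∧ x ∈ C := by
    simp only [mem_preimage, mem_image, Quotient.eq]
    rfl
  rw [hmem]
  split_ifs with h
  · constructor
    · rintro ⟨y, hy, rfl | ⟨-, hx⟩⟩
      exacts [Or.inl hy, Or.inr hx]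
    · rintro (hx | hx)
      · exact ⟨x, hx, Or.inl rfl⟩
      · obtain ⟨y, hys, hyC⟩ := h
        exact ⟨y, hys, Or.inr ⟨hyC, hx⟩⟩
  · constructor
    · rintro ⟨y, hy, rfl | ⟨hyC, -⟩⟩
      exacts [hy, absurd ⟨y, hy, hyC⟩ h]
    · exact fun hx => ⟨x, hx, Or.inl rfl⟩

theorem mk_preimage_image_collapse_of_subset {s : Set α} (hCs : C ⊆ s) :
    Quotient.mk (collapseSetoid C) ⁻¹' (Quotient.mk (collapseSetoid C) '' s) = s := by
  rw [mk_preimage_image_collapse]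
  split_ifs <;> simp [hCs]

variable [TopologicalSpace α]

theorem isClosedMap_mk_collapse (hC : IsClosed C) :
    IsClosedMap (Quotient.mk (collapseSetoid C)) := by
  intro F hF
  rw [← isQuotientMap_quotient_mk.isClosed_preimage, mk_preimage_image_collapse]
  split_ifs
  exacts [hF.union hC, hF]

theorem t2Space_collapse [T4Space α] (hC : IsClosed C) :
    T2Space (Quotient (collapseSetoid C)) :=
  have hq := isClosedMap_mk_collapse hC
  have : NormalSpace (Quotient (collapseSetoid C)) :=
    hq.normalSpace continuous_quot_mk Quotient.mk_surjective
  have : T1Space (Quotient (collapseSetoid C)) := ⟨fun z => by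
    induction z using Quotient.ind with
    | _ x => simpa only [image_singleton] using hq _ (isClosed_singleton (x := x))⟩
  inferInstance

end Collapse

theorem IsOpen.isOpen_union_iff_isOpen_preimage_val {β : Type*} [TopologicalSpace β]
    {R C : Set β} (hR : IsOpen R) :
    IsOpen (R ∪ C) ↔ IsOpen ((↑) ⁻¹' C : Set ↥Rᶜ) := by
  have hpre : ((↑) ⁻¹' C : Set ↥Rᶜ) = (↑) ⁻¹' (R ∪ C) := by
    ext ⟨x, hx⟩
    simp
  refine ⟨fun h => hpre ▸ h.preimage continuous_subtype_val, fun h => ?_⟩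
  obtain ⟨U, hU, hUC⟩ := isOpen_induced_iff.mp h
  convert hR.union hU using 1
  ext x
  by_cases hx : x ∈ R
  · simp [hx]
  · simpa [hx] using (Set.ext_iff.mp hUC ⟨x, hx⟩).symm

theorem stmt13_general (X : Type) [TopologicalSpace X] [T35Space X] [LocallyCompactSpace X]
    (C : Set (StoneCech X)) (hCc : IsClosed C) :
    LocallyCompactSpace
        ↥(Quotient.mk (collapseSetoid C) ''
            (Set.range (stoneCechUnit : X → StoneCech X) ∪ C)) ↔
      IsOpen {y : ↥((Set.range (stoneCechUnit : X → StoneCech X))ᶜ) |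
        (y : StoneCech X) ∈ C} := by
  set R := Set.range (stoneCechUnit : X → StoneCech X)
  have : LocallyCompactSpace R :=
    isEmbedding_stoneCechUnit.toHomeomorph.locallyCompactSpace_iff.mp ‹_›
  have hR : IsOpen R := denseRange_stoneCechUnit.isOpen_of_locallyCompactSpace
  have : T2Space (Quotient (collapseSetoid C)) := t2Space_collapse hCc
  have hY : Dense (Quotient.mk (collapseSetoid C) '' (R ∪ C)) :=
    (Quotient.mk_surjective.denseRange.dense_image continuous_quot_mk
      denseRange_stoneCechUnit).mono (image_mono subset_union_left)
  rw [hY.locallyCompactSpace_iff_isOpen, ← isQuotientMap_quotient_mk.isOpen_preimage,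
    mk_preimage_image_collapse_of_subset subset_union_right]
  exact hR.isOpen_union_iff_isOpen_preimage_val

/-- let `X` be locally compact Tychonoff, `C` a nonempty closed subset of
`βX \ X`, `Z` the quotient of `βX` collapsing `C` to a point, and `Y = X ∪ {p} ⊆ Z`.
Then `Y` is locally compact iff `C` is open in `βX \ X`. -/
theorem stmt13 (X : Type) [TopologicalSpace X] [T35Space X] [LocallyCompactSpace X]
    (C : Set (StoneCech X)) (hCc : IsClosed C) (hCne : C.Nonempty)
    (hCrem : C ⊆ (Set.range (stoneCechUnit : X → StoneCech X))ᶜ) :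
    LocallyCompactSpace
        ↥(Quotient.mk (collapseSetoid C) ''
            (Set.range (stoneCechUnit : X → StoneCech X) ∪ C)) ↔
      IsOpen {y : ↥((Set.range (stoneCechUnit : X → StoneCech X))ᶜ) |
        (y : StoneCech X) ∈ C} :=
  stmt13_general X C hCc
end

section
/- The remainder β[0,∞) \ [0,∞) of the Stone–Čech compactification of the half-line is connected; consequently, any clopen subset of β[0,∞) \ [0,∞) is empty or the whole remainder. -/
/-!
A point of `β[0,∞)` outside `[0,∞)` lies in the closure of every tail `(n,∞)`, since the
complementary piece `[0,n]` is compact, while a point of `[0,∞)` does not, because `[0,∞)` is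
embedded in `β[0,∞)`. So the remainder is the intersection of the decreasing sequence of closures
of the tails; these are compact and connected, and in a Hausdorff space such an intersection is
connected.
-/

open Set

theorem IsConnected.iInter_of_directed {X ι : Type*} [TopologicalSpace X] [T2Space X]
    [Nonempty ι] {C : ι → Set X} (hdir : Directed (· ⊇ ·) C) (hcomp : ∀ i, IsCompact (C i))
    (hconn : ∀ i, IsConnected (C i)) : IsConnected (⋂ i, C i) := by
  have hclosed : IsClosed (⋂ i, C i) := isClosed_iInter fun i => (hcomp i).isClosed
  have hK : IsCompact (⋂ i, C i) := (hcomp (Classical.arbitrary ι)).of_isClosed_subset hclosed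
    (iInter_subset _ _)
  refine ⟨IsCompact.nonempty_iInter_of_directed_nonempty_isCompact_isClosed C hdir
    (fun i => (hconn i).nonempty) hcomp (fun i => (hcomp i).isClosed), ?_⟩
  rw [isPreconnected_iff_subset_of_fully_disjoint_closed hclosed]
  intro u v hu hv hKuv huv
  obtain ⟨U, V, hU, hV, huU, hvV, hUV⟩ := SeparatedNhds.of_isCompact_isCompact
    (hK.inter_right hu) (hK.inter_right hv) (huv.mono inter_subset_right inter_subset_right)
  have hKUV : (⋂ i, C i) ⊆ U ∪ V := fun x hx =>
    (hKuv hx).imp (fun hxu => huU ⟨hx, hxu⟩) (fun hxv => hvV ⟨hx, hxv⟩)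
  obtain ⟨i, hi⟩ := exists_subset_nhds_of_isCompact hdir hcomp
    fun x hx => (hU.union hV).mem_nhds (hKUV hx)
  have hKi : (⋂ i, C i) ⊆ C i := iInter_subset _ i
  rcases (hconn i).isPreconnected.subset_or_subset hU hV hUV hi with hCU | hCV
  · refine .inl fun x hx => (hKuv hx).resolve_right fun hxv => ?_
    exact hUV.ne_of_mem (hCU (hKi hx)) (hvV ⟨hx, hxv⟩) rfl
  · refine .inr fun x hx => (hKuv hx).resolve_left fun hxu => ?_
    exact hUV.ne_of_mem (huU ⟨hx, hxu⟩) (hCV (hKi hx)) rfl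

section StoneCech

variable {X : Type*} [TopologicalSpace X]

theorem compl_range_stoneCechUnit_subset_closure_image {s : Set X} (hs : IsCompact sᶜ) :
    (range (stoneCechUnit : X → StoneCech X))ᶜ ⊆ closure (stoneCechUnit '' s) := by
  have hcover : closure (stoneCechUnit '' s) ∪ stoneCechUnit '' sᶜ = univ := by
    rw [← (hs.image continuous_stoneCechUnit).isClosed.closure_eq, ← closure_union,
      ← image_union, union_compl_self, image_univ, denseRange_stoneCechUnit.closure_range]
  intro x hx
  refine (hcover.ge (mem_univ x)).resolve_right ?_
  rintro ⟨y, -, rfl⟩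
  exact hx (mem_range_self y)

theorem compl_range_stoneCechUnit_eq_iInter [CompletelyRegularSpace X] {ι : Type*}
    {s : ι → Set X} (hs : ∀ i, IsCompact (s i)ᶜ) (hempty : ⋂ i, closure (s i) = ∅) :
    (range (stoneCechUnit : X → StoneCech X))ᶜ = ⋂ i, closure (stoneCechUnit '' s i) := by
  refine subset_antisymm (subset_iInter fun i => compl_range_stoneCechUnit_subset_closure_image
    (hs i)) ?_
  rintro _ hx ⟨y, rfl⟩
  have hy : y ∈ ⋂ i, closure (s i) := mem_iInter.2 fun i => by
    rw [isInducing_stoneCechUnit.closure_eq_preimage_closure_image]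
    exact mem_iInter.1 hx i
  rwa [hempty] at hy

end StoneCech

theorem compl_range_stoneCechUnit_nnreal :
    (range (stoneCechUnit : NNReal → StoneCech NNReal))ᶜ =
      ⋂ n : ℕ, closure (stoneCechUnit '' Ioi (n : NNReal)) := by
  refine compl_range_stoneCechUnit_eq_iInter (fun n => by simpa [← Icc_bot] using isCompact_Icc) ?_
  refine eq_empty_of_forall_notMem fun x hx => ?_
  obtain ⟨n, hn⟩ := exists_nat_gt x
  have hxn : (n : NNReal) ≤ x := by
    simpa only [closure_Ioi, mem_Ici] using mem_iInter.1 hx n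
  exact hxn.not_gt hn

/-- the remainder `β[0,∞) \ [0,∞)` is connected; consequently, every clopen
subset of the remainder is empty or the whole remainder. (Here `[0,∞)` is realized as
`ℝ≥0` with its usual topology.) -/
theorem stmt14 :
    IsConnected ((Set.range (stoneCechUnit : NNReal → StoneCech NNReal))ᶜ) ∧
      ∀ S : Set ↥((Set.range (stoneCechUnit : NNReal → StoneCech NNReal))ᶜ),
        IsClopen S → S = ∅ ∨ S = Set.univ := by
  have hconn : IsConnected ((range (stoneCechUnit : NNReal → StoneCech NNReal))ᶜ) := by
    rw [compl_range_stoneCechUnit_nnreal]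
    refine IsConnected.iInter_of_directed ?_ (fun n => isClosed_closure.isCompact) fun n => ?_
    · exact Antitone.directed_ge fun m k hmk =>
        closure_mono (image_mono (Ioi_subset_Ioi (by exact_mod_cast hmk)))
    · exact (isConnected_Ioi.image _ continuous_stoneCechUnit.continuousOn).closure
  have := Subtype.connectedSpace hconn
  exact ⟨hconn, fun S hS => isClopen_iff.mp hS⟩
end

section
/- Let X be a Tychonoff space and Y an extension of X (X dense in Y) with compact remainder Y \ X, and let φ : βX → βY be the continuous extension of the identity on X. Then φ restricted to βX \ φ^{-1}[Y \ X] is injective, and βY is the quotient of βX obtained by collapsing each fiber φ^{-1}(p), p ∈ Y \ X, to the point p, with φ the quotient map. -/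
/-- if `Y` is an extension of `X` with compact remainder and
`φ : βX → βY` continuously extends the identity of `X`, then `φ` is a surjective
quotient map which is injective outside `φ⁻¹[Y \ X]`; i.e. `βY` is the quotient of
`βX` collapsing the fibers over the points of `Y \ X`. -/
theorem stmt17 (X Y : Type) [TopologicalSpace X] [T35Space X]
    [TopologicalSpace Y] [T35Space Y]
    (e : X → Y) (he : Topology.IsEmbedding e) (hd : DenseRange e)
    (hrem : IsCompact (Set.range e)ᶜ)
    (φ : StoneCech X → StoneCech Y) (hφ : Continuous φ)
    (hext : φ ∘ stoneCechUnit = stoneCechUnit ∘ e) :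
    Function.Surjective φ ∧ Topology.IsQuotientMap φ ∧
      Set.InjOn φ (φ ⁻¹' ((stoneCechUnit : Y → StoneCech Y) '' (Set.range e)ᶜ))ᶜ := by
  -- surjectivity
  have hdense : DenseRange (stoneCechUnit ∘ e : X → StoneCech Y) :=
    denseRange_stoneCechUnit.comp hd continuous_stoneCechUnit
  have hsub : Set.range (stoneCechUnit ∘ e : X → StoneCech Y) ⊆ Set.range φ := by
    rw [← hext]
    exact Set.range_comp_subset_range _ _
  have hclosed : IsClosed (Set.range φ) := (isCompact_range hφ).isClosed
  have hrange : Set.range φ = Set.univ := by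
    apply Set.eq_univ_of_univ_subset
    calc Set.univ = closure (Set.range (stoneCechUnit ∘ e : X → StoneCech Y)) :=
          (hdense.closure_eq).symm
      _ ⊆ closure (Set.range φ) := closure_mono hsub
      _ = Set.range φ := hclosed.closure_eq
  have hsurj : Function.Surjective φ := Set.range_eq_univ.mp hrange
  refine ⟨hsurj, (hφ.isClosedMap).isQuotientMap hφ hsurj, ?_⟩
  -- injectivity off the fibers over the remainder
  intro p hp q hq hpq
  by_contra hne
  set K : Set (StoneCech Y) := (stoneCechUnit : Y → StoneCech Y) '' (Set.range e)ᶜ with hK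
  have hKcomp : IsCompact K := hrem.image continuous_stoneCechUnit
  have hKclosed : IsClosed K := hKcomp.isClosed
  have hrK : φ p ∉ K := hp
  -- Urysohn function on βY separating φ p from K
  obtain ⟨F, hF0, hF1, hF01⟩ :=
    exists_continuous_zero_one_of_isClosed (isClosed_singleton (x := φ p)) hKclosed
      (Set.disjoint_singleton_left.mpr hrK)
  -- Urysohn function on βX separating p from q
  obtain ⟨g, hg0, hg1, hg01⟩ :=
    exists_continuous_zero_one_of_isClosed (isClosed_singleton (x := p))
      (isClosed_singleton (x := q)) (Set.disjoint_singleton.mpr hne)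
  set G : StoneCech X → ℝ := fun z => max (g z) (F (φ z)) with hG
  have hGcont : Continuous G := (map_continuous g).max ((map_continuous F).comp hφ)
  have hG01 : ∀ z, G z ∈ Set.Icc (0 : ℝ) 1 := by
    intro z
    exact ⟨le_max_of_le_left (hg01 z).1, max_le (hg01 z).2 (hF01 (φ z)).2⟩
  have hGp : G p = 0 := by
    have h1 : g p = 0 := hg0 rfl
    have h2 : F (φ p) = 0 := hF0 rfl
    simp [hG, h1, h2]
  have hGq : G q = 1 := by
    have h1 : g q = 1 := hg1 rfl
    have h2 : F (φ q) = 0 := by rw [← hpq]; exact hF0 rfl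
    simp [hG, h1, h2]
  -- range e is open in Y
  have hT2 : T2Space Y := inferInstance
  have hopen : IsOpen (Set.range e) := by
    have := hrem.isClosed
    simpa using this.isOpen_compl
  have heinj : Function.Injective e := he.injective
  -- the function h on Y
  classical
  set h : Y → ℝ := fun y => if hy : ∃ x, e x = y then G (stoneCechUnit hy.choose) else 1
    with hh
  have hhe : ∀ x : X, h (e x) = G (stoneCechUnit x) := by
    intro x
    have hx : ∃ x', e x' = e x := ⟨x, rfl⟩
    have : hx.choose = x := heinj hx.choose_spec
    simp [hh, dif_pos hx, this]
  have hhK : ∀ y, y ∉ Set.range e → h y = 1 := by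
    intro y hy
    have : ¬ ∃ x, e x = y := by simpa [Set.range] using hy
    simp [hh, dif_neg this]
  have hFu : ∀ y : Y, F (stoneCechUnit y) ≤ h y := by
    intro y
    by_cases hy : y ∈ Set.range e
    · obtain ⟨x, rfl⟩ := hy
      rw [hhe x]
      have : F (φ (stoneCechUnit x)) ≤ G (stoneCechUnit x) := le_max_right _ _
      have hcomp : φ (stoneCechUnit x) = stoneCechUnit (e x) := congrFun hext x
      rwa [hcomp] at this
    · rw [hhK y hy]
      exact (hF01 _).2
  have hle1 : ∀ y : Y, h y ≤ 1 := by
    intro y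
    by_cases hy : y ∈ Set.range e
    · obtain ⟨x, rfl⟩ := hy
      rw [hhe x]; exact (hG01 _).2
    · rw [hhK y hy]
  have hmem : ∀ y : Y, h y ∈ Set.Icc (0 : ℝ) 1 := by
    intro y
    refine ⟨?_, hle1 y⟩
    by_cases hy : y ∈ Set.range e
    · obtain ⟨x, rfl⟩ := hy
      rw [hhe x]; exact (hG01 _).1
    · rw [hhK y hy]; norm_num
  -- continuity of h
  have hhcont : Continuous h := by
    rw [continuous_iff_continuousAt]
    intro y
    by_cases hy : y ∈ Set.range e
    · obtain ⟨x, rfl⟩ := hy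
      have hoe : Topology.IsOpenEmbedding e := ⟨he, hopen⟩
      rw [← hoe.continuousAt_iff]
      have : h ∘ e = G ∘ stoneCechUnit := funext hhe
      rw [this]
      exact (hGcont.comp continuous_stoneCechUnit).continuousAt
    · -- squeeze: F ∘ unit ≤ h ≤ 1, and F (unit y) = 1
      have hy1 : h y = 1 := hhK y hy
      have hFy : F (stoneCechUnit y) = 1 := hF1 ⟨y, hy, rfl⟩
      have htend : Filter.Tendsto (fun y' => F (stoneCechUnit y')) (nhds y) (nhds 1) := by
        have hc : Continuous fun y' => F (stoneCechUnit y') :=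
          (map_continuous F).comp continuous_stoneCechUnit
        have hc2 : Filter.Tendsto (fun y' => F (stoneCechUnit y')) (nhds y)
            (nhds (F (stoneCechUnit y))) := hc.continuousAt
        rwa [hFy] at hc2
      have : Filter.Tendsto h (nhds y) (nhds 1) :=
        tendsto_of_tendsto_of_tendsto_of_le_of_le htend tendsto_const_nhds
          (fun y' => hFu y') (fun y' => hle1 y')
      rw [ContinuousAt, hy1]
      exact this
  -- extend h to βY (via the unit interval)
  set h' : Y → Set.Icc (0 : ℝ) 1 := fun y => ⟨h y, hmem y⟩ with hh'
  have hh'cont : Continuous h' := hhcont.subtype_mk _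
  haveI : CompactSpace (Set.Icc (0 : ℝ) 1) := isCompact_iff_compactSpace.mp isCompact_Icc
  set H' : StoneCech Y → Set.Icc (0 : ℝ) 1 := stoneCechExtend hh'cont with hH'
  set H : StoneCech Y → ℝ := fun z => (H' z : ℝ) with hH
  have hHcont : Continuous H := continuous_subtype_val.comp (continuous_stoneCechExtend _)
  have hHu : ∀ y : Y, H (stoneCechUnit y) = h y := by
    intro y
    have hy := congrFun (stoneCechExtend_extends hh'cont) y
    have : H' (stoneCechUnit y) = h' y := hy
    exact congrArg Subtype.val this
  -- H ∘ φ = G by density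
  have hkey : H ∘ φ = G := by
    apply denseRange_stoneCechUnit.equalizer (hHcont.comp hφ) hGcont
    funext x
    have hcomp : φ (stoneCechUnit x) = stoneCechUnit (e x) := congrFun hext x
    simp only [Function.comp_apply, hcomp, hHu, hhe]
  have : G p = G q := by
    rw [← hkey]
    simp only [Function.comp_apply, hpq]
  rw [hGp, hGq] at this
  norm_num at this
end

section
/- Let X be a Tychonoff space and Y₁, Y₂ extensions of X with compact remainders, with φᵢ : βX → βYᵢ the continuous extensions of id_X and F(Yᵢ) = { φᵢ^{-1}(p) : p ∈ Yᵢ \ X }. Then Y₁ ≤ Y₂ (there is a continuous map Y₂ → Y₁ fixing X pointwise) if and only if every member of F(Y₂) is contained in a member of F(Y₁). -/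
/-!
For `Y₁ ≤ Y₂`, a map `f : Y₂ → Y₁` over `X` cannot send a remainder point `p` into `X`: the trace
of `𝓝 p` on `X` would then converge in `X`, hence in `Y₂` to a point of `X` as well as to `p`. Its
Stone–Čech extension `βY₂ → βY₁` satisfies `βf ∘ φ₂ = φ₁`, so it carries the fiber `φ₂⁻¹(p)`
into `φ₁⁻¹(f p)`.

Conversely, send each remainder point `p` of `Y₂` to a point `q` with `φ₂⁻¹(p) ⊆ φ₁⁻¹(q)`. On the
open set `X ⊆ Y₂` this map is `id_X`; at a remainder point `p`, lift a net converging to `p`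
through the surjection `φ₂` and use compactness of `βX`: every cluster point of the lift lies in
`φ₂⁻¹(p)`, so its image under `φ₁` is `q`.
-/

open Filter Topology Set

section

variable {X Y Z : Type*} [TopologicalSpace X] [TopologicalSpace Y] [TopologicalSpace Z]

lemma mem_range_of_apply_mem_range [T2Space Y] {e : X → Y} {e' : X → Z} {f : Y → Z}
    (he : Continuous e) (hd : DenseRange e) (he' : IsInducing e') (hf : Continuous f)
    (hfe : f ∘ e = e') {p : Y} (hp : f p ∈ range e') : p ∈ range e := by
  obtain ⟨x, hx⟩ := hp
  have : (comap e (𝓝 p)).NeBot := comap_neBot_iff.mpr fun t ht => by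
    obtain ⟨_, hat, a, rfl⟩ := mem_closure_iff_nhds.mp (hd p) t ht
    exact ⟨a, hat⟩
  have hx' : Tendsto e' (comap e (𝓝 p)) (𝓝 (e' x)) := by
    rw [hx, ← hfe]
    exact (hf.tendsto p).comp tendsto_comap
  have hlim : Tendsto id (comap e (𝓝 p)) (𝓝 x) := he'.tendsto_nhds_iff.mpr hx'
  exact ⟨x, tendsto_nhds_unique ((he.tendsto x).comp hlim) tendsto_comap⟩

lemma preimage_stoneCechUnit_subset_of_comp_eq {e : X → Y} {f : Y → Z} (hf : Continuous f)
    {φ : StoneCech X → StoneCech Y} (hφ : Continuous φ)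
    (hφe : φ ∘ stoneCechUnit = stoneCechUnit ∘ e)
    {ψ : StoneCech X → StoneCech Z} (hψ : Continuous ψ)
    (hψe : ψ ∘ stoneCechUnit = stoneCechUnit ∘ f ∘ e) (p : Y) :
    φ ⁻¹' {stoneCechUnit p} ⊆ ψ ⁻¹' {stoneCechUnit (f p)} := by
  have hβf := continuous_stoneCechUnit.comp hf
  have hcomm : stoneCechExtend hβf ∘ φ = ψ := by
    refine stoneCech_hom_ext ((continuous_stoneCechExtend hβf).comp hφ) hψ ?_
    rw [Function.comp_assoc, hφe, ← Function.comp_assoc, stoneCechExtend_extends, hψe,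
      Function.comp_assoc]
  intro z hz
  rw [mem_preimage, mem_singleton_iff] at hz ⊢
  rw [← hcomm, Function.comp_apply, hz, stoneCechExtend_stoneCechUnit, Function.comp_apply]

lemma surjective_of_comp_stoneCechUnit {e : X → Y} (hd : DenseRange e)
    {φ : StoneCech X → StoneCech Y} (hφ : Continuous φ)
    (hφe : φ ∘ stoneCechUnit = stoneCechUnit ∘ e) : Function.Surjective φ := by
  have hdense : DenseRange φ := by
    refine Dense.mono (range_comp_subset_range stoneCechUnit φ) ?_
    rw [hφe]
    exact denseRange_stoneCechUnit.comp hd continuous_stoneCechUnit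
  exact fun z => (isCompact_range hφ).isClosed.closure_subset (hdense z)

lemma continuousAt_of_preimage_subset {K W : Type*} [TopologicalSpace K] [TopologicalSpace W]
    [CompactSpace K] [T2Space Z] {φ : K → Z} {ψ : K → W} (hφ : Continuous φ) (hψ : Continuous ψ)
    {u : Y → Z} {g : Y → W} (hlift : ∀ y, ∃ k, φ k = u y ∧ ψ k = g y) {p : Y}
    (hu : ContinuousAt u p) (hp : φ ⁻¹' {u p} ⊆ ψ ⁻¹' {g p}) : ContinuousAt g p := by
  choose w hφw hψw using hlift
  replace hφw : φ ∘ w = u := funext hφw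
  replace hψw : ψ ∘ w = g := funext hψw
  rw [continuousAt_iff_ultrafilter]
  intro 𝒰 h𝒰
  obtain ⟨k, -, hk⟩ := isCompact_univ.ultrafilter_le_nhds (𝒰.map w) (by simp)
  have hφk : φ k = u p := by
    refine tendsto_nhds_unique ((hφ.tendsto k).mono_left hk) ?_
    rw [Ultrafilter.coe_map, Tendsto, map_map, hφw]
    exact hu.mono_left h𝒰
  have hψk : ψ k = g p := hp hφk
  rw [← hψk, ← hψw, Tendsto, ← map_map]
  exact (hψ.tendsto k).mono_left hk

end

lemma continuous_of_preimage_stoneCechUnit_subset {X Y₁ Y₂ : Type*} [TopologicalSpace X]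
    [TopologicalSpace Y₁] [CompletelyRegularSpace Y₁] [TopologicalSpace Y₂] [T2Space Y₂]
    {e₁ : X → Y₁} (he₁ : Continuous e₁) {e₂ : X → Y₂} (he₂ : IsEmbedding e₂)
    (hd₂ : DenseRange e₂) (hc₂ : IsCompact (range e₂)ᶜ)
    {φ₁ : StoneCech X → StoneCech Y₁} (hφ₁ : Continuous φ₁)
    (hφe₁ : φ₁ ∘ stoneCechUnit = stoneCechUnit ∘ e₁)
    {φ₂ : StoneCech X → StoneCech Y₂} (hφ₂ : Continuous φ₂)
    (hφe₂ : φ₂ ∘ stoneCechUnit = stoneCechUnit ∘ e₂)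
    {f : Y₂ → Y₁} (hfe : f ∘ e₂ = e₁)
    (hf : ∀ p ∉ range e₂, φ₂ ⁻¹' {stoneCechUnit p} ⊆ φ₁ ⁻¹' {stoneCechUnit (f p)}) :
    Continuous f := by
  rw [continuous_iff_continuousAt]
  intro p
  by_cases hp : p ∈ range e₂
  · obtain ⟨x, rfl⟩ := hp
    have hopen : IsOpen (range e₂) := by simpa using hc₂.isClosed.isOpen_compl
    rw [← he₂.isInducing.continuousAt_iff' (hopen.mem_nhds (mem_range_self x)), hfe]
    exact he₁.continuousAt
  · rw [isInducing_stoneCechUnit.continuousAt_iff]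
    refine continuousAt_of_preimage_subset hφ₂ hφ₁ (fun y => ?_)
      continuous_stoneCechUnit.continuousAt (hf p hp)
    by_cases hy : y ∈ range e₂
    · obtain ⟨x, rfl⟩ := hy
      exact ⟨stoneCechUnit x, congrFun hφe₂ x,
        (congrFun hφe₁ x).trans (congrArg stoneCechUnit (congrFun hfe x).symm)⟩
    · obtain ⟨k, hk⟩ := surjective_of_comp_stoneCechUnit hd₂ hφ₂ hφe₂ (stoneCechUnit y)
      exact ⟨k, hk, hf y hy hk⟩

theorem stmt18_general (X Y₁ Y₂ : Type) [TopologicalSpace X]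
    [TopologicalSpace Y₁] [T35Space Y₁] [TopologicalSpace Y₂] [T35Space Y₂]
    (e₁ : X → Y₁) (he₁ : Topology.IsEmbedding e₁)
    (e₂ : X → Y₂) (he₂ : Topology.IsEmbedding e₂) (hd₂ : DenseRange e₂)
    (hc₂ : IsCompact (Set.range e₂)ᶜ)
    (φ₁ : StoneCech X → StoneCech Y₁) (hφ₁ : Continuous φ₁)
    (hext₁ : φ₁ ∘ stoneCechUnit = stoneCechUnit ∘ e₁)
    (φ₂ : StoneCech X → StoneCech Y₂) (hφ₂ : Continuous φ₂)
    (hext₂ : φ₂ ∘ stoneCechUnit = stoneCechUnit ∘ e₂) :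
    (∃ f : Y₂ → Y₁, Continuous f ∧ f ∘ e₂ = e₁) ↔
      ∀ p : Y₂, p ∉ Set.range e₂ →
        ∃ q : Y₁, q ∉ Set.range e₁ ∧
          φ₂ ⁻¹' {stoneCechUnit p} ⊆ φ₁ ⁻¹' {stoneCechUnit q} := by
  constructor
  · rintro ⟨f, hf, hfe⟩ p hp
    refine ⟨f p, fun hfp => hp ?_, ?_⟩
    · exact mem_range_of_apply_mem_range he₂.continuous hd₂ he₁.isInducing hf hfe hfp
    · exact preimage_stoneCechUnit_subset_of_comp_eq hf hφ₂ hext₂ hφ₁ (by rw [hfe, hext₁]) p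
  · intro H
    choose q _ hq using H
    classical
    let f : Y₂ → Y₁ := fun y => if h : y ∈ range e₂ then e₁ h.choose else q y h
    have hfe : f ∘ e₂ = e₁ := funext fun x => by
      have hx : e₂ x ∈ range e₂ := mem_range_self x
      simp only [f, Function.comp_apply, dif_pos hx, he₂.injective hx.choose_spec]
    refine ⟨f, ?_, hfe⟩
    refine continuous_of_preimage_stoneCechUnit_subset he₁.continuous he₂ hd₂ hc₂ hφ₁ hext₁ hφ₂
      hext₂ hfe fun p hp => ?_
    simpa only [f, dif_neg hp] using hq p hp

/-- for extensions `Y₁, Y₂` of `X` with compact remainders, with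
`φᵢ : βX → βYᵢ` extending `id_X` and `F(Yᵢ) = {φᵢ⁻¹(p) : p ∈ Yᵢ \ X}`, one has
`Y₁ ≤ Y₂` iff every member of `F(Y₂)` is contained in a member of `F(Y₁)`. -/
theorem stmt18 (X Y₁ Y₂ : Type) [TopologicalSpace X] [T35Space X]
    [TopologicalSpace Y₁] [T35Space Y₁] [TopologicalSpace Y₂] [T35Space Y₂]
    (e₁ : X → Y₁) (he₁ : Topology.IsEmbedding e₁) (hd₁ : DenseRange e₁)
    (hc₁ : IsCompact (Set.range e₁)ᶜ)
    (e₂ : X → Y₂) (he₂ : Topology.IsEmbedding e₂) (hd₂ : DenseRange e₂)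
    (hc₂ : IsCompact (Set.range e₂)ᶜ)
    (φ₁ : StoneCech X → StoneCech Y₁) (hφ₁ : Continuous φ₁)
    (hext₁ : φ₁ ∘ stoneCechUnit = stoneCechUnit ∘ e₁)
    (φ₂ : StoneCech X → StoneCech Y₂) (hφ₂ : Continuous φ₂)
    (hext₂ : φ₂ ∘ stoneCechUnit = stoneCechUnit ∘ e₂) :
    (∃ f : Y₂ → Y₁, Continuous f ∧ f ∘ e₂ = e₁) ↔
      ∀ p : Y₂, p ∉ Set.range e₂ →
        ∃ q : Y₁, q ∉ Set.range e₁ ∧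
          φ₂ ⁻¹' {stoneCechUnit p} ⊆ φ₁ ⁻¹' {stoneCechUnit q} :=
  stmt18_general X Y₁ Y₂ e₁ he₁ e₂ he₂ hd₂ hc₂ φ₁ hφ₁ hext₁ φ₂ hφ₂ hext₂
end

section
/- Let X be a Tychonoff space, Y an extension of X with compact remainder, ζY a compactification of Y, and φ : βX → ζY the continuous extension of id_X. Then Y is pseudocompact if and only if cl_{βX}(βX \ υX) ⊆ φ^{-1}[Y \ X]. -/
/-!
If `Y` is pseudocompact and `p ∈ βX \ υX` is witnessed by `f` (continuous, vanishing at `p` but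
nowhere on `X`), then `φ p` must lie in the compact set `Y \ X`: otherwise a Urysohn function `u`
separating `φ p` from `Y \ X` turns `min 1 (|f| + 2 u ∘ φ)` into a positive continuous function on
`Y` (constantly `1` near `Y \ X`) with infimum `0`.

Conversely, a positive continuous `h` on `Y` clipped to `[0, 1]` extends over `βX`; at a point
`p ∈ βX \ υX` the extension agrees with `h` at the point of `Y` over `φ p`, so it never vanishes,
and compactness of `βX` yields a positive lower bound for `h`.
-/

open Set Topology Filter Function

theorem isPseudocompactSpace_iff_forall_pos_exists_pos_le {Y : Type} [TopologicalSpace Y] :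
    IsPseudocompactSpace Y ↔
      ∀ h : Y → ℝ, Continuous h → (∀ y, 0 < h y) → ∃ δ > 0, ∀ y, δ ≤ h y := by
  constructor
  · intro hY h hc hpos
    obtain ⟨M, hM⟩ := hY (fun y => 1 / h y) (continuous_const.div hc fun y => (hpos y).ne')
    refine ⟨1 / (|M| + 1), by positivity, fun y => ?_⟩
    have hlt : 1 / h y < |M| + 1 :=
      (le_abs_self _).trans_lt ((hM y).trans_lt (by linarith [le_abs_self M]))
    exact ((one_div_lt (hpos y) (by positivity)).1 hlt).le
  · intro hY f hf
    obtain ⟨δ, hδ, hle⟩ := hY (fun y => 1 / (1 + |f y|)) (continuous_const.div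
      (continuous_const.add hf.abs) fun y => by positivity) fun y => by positivity
    refine ⟨1 / δ, fun y => ?_⟩
    have := (le_one_div hδ (by positivity)).1 (hle y)
    linarith

theorem notMem_hewitt_iff {X : Type} [TopologicalSpace X] {p : StoneCech X} :
    p ∉ hewitt X ↔ ∃ f : StoneCech X → ℝ, Continuous f ∧ f p = 0 ∧
      ∀ x, f (stoneCechUnit x) ≠ 0 := by
  simp only [hewitt, mem_sInter, mem_ofPred_eq, not_forall, exists_prop]
  constructor
  · rintro ⟨_, ⟨⟨f, hf, rfl⟩, hX⟩, hp⟩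
    exact ⟨f, hf, not_not.1 hp, fun x => hX ⟨x, rfl⟩⟩
  · rintro ⟨f, hf, hp, hX⟩
    exact ⟨_, ⟨⟨f, hf, rfl⟩, range_subset_iff.2 hX⟩, not_not.2 hp⟩

theorem Topology.IsOpenEmbedding.continuous_extend_const {X Y β : Type*} [TopologicalSpace X]
    [TopologicalSpace Y] [TopologicalSpace β] {e : X → Y} (he : IsOpenEmbedding e) {g : X → β}
    (hg : Continuous g) {c : β} {O : Set Y} (hO : IsOpen O) (hrem : (range e)ᶜ ⊆ O)
    (hgO : ∀ x, e x ∈ O → g x = c) : Continuous (extend e g fun _ => c) := by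
  refine continuous_iff_continuousAt.2 fun y => ?_
  by_cases hy : y ∈ range e
  · obtain ⟨x, rfl⟩ := hy
    rw [← he.continuousAt_iff, extend_comp he.injective]
    exact hg.continuousAt
  · have hO' : ∀ y' ∈ O, extend e g (fun _ => c) y' = c := fun y' hy' => by
      by_cases hy'e : ∃ x, e x = y'
      · obtain ⟨x, rfl⟩ := hy'e
        rw [he.injective.extend_apply, hgO x hy']
      · rw [extend_apply' _ _ _ hy'e]
    exact continuousAt_const.congr
      (eventuallyEq_of_mem (hO.mem_nhds (hrem hy)) fun y' hy' => (hO' y' hy').symm)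

theorem apply_eq_of_comp_eq_of_denseRange {X Y Z A T : Type*} [TopologicalSpace Y]
    [TopologicalSpace Z] [TopologicalSpace A] [TopologicalSpace T] [T2Space T]
    {ι : X → A} (hι : DenseRange ι) {e : X → Y} {φ : A → Z} (hφ : Continuous φ) {j : Y → Z}
    (hj : IsInducing j) (hext : φ ∘ ι = j ∘ e) {H : A → T} (hH : Continuous H) {k : Y → T}
    (hk : Continuous k) (hHk : H ∘ ι = k ∘ e) {p : A} {y : Y} (hpy : φ p = j y) :
    H p = k y := by
  by_contra hne
  obtain ⟨U, V, hU, hV, hpU, hyV, hUV⟩ := t2_separation hne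
  obtain ⟨W, hW, hWV⟩ := hj.isOpen_iff.1 (hV.preimage hk)
  have hyW : j y ∈ W := by rw [← mem_preimage, hWV]; exact hyV
  obtain ⟨x, hxU, hxW⟩ := hι.exists_mem_open ((hU.preimage hH).inter (hW.preimage hφ))
    ⟨p, hpU, show φ p ∈ W by rw [hpy]; exact hyW⟩
  have hxU' : k (e x) ∈ U := by rw [← comp_apply (f := k), ← hHk]; exact hxU
  have hxV : k (e x) ∈ V := by
    rw [← mem_preimage, ← hWV, mem_preimage, ← comp_apply (f := j), ← hext]; exact hxW
  exact hUV.ne_of_mem hxU' hxV rfl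

section Remainder

variable {X Y Z : Type} [TopologicalSpace X] [TopologicalSpace Y] [TopologicalSpace Z]
  {e : X → Y} {j : Y → Z} {φ : StoneCech X → Z}

theorem image_compl_hewitt_subset_of_isPseudocompactSpace [CompletelyRegularSpace Z]
    (hY : IsPseudocompactSpace Y) (he : IsOpenEmbedding e) (hj : Continuous j)
    (hφ : Continuous φ) (hext : φ ∘ stoneCechUnit = j ∘ e) (hK : IsClosed (j '' (range e)ᶜ)) :
    φ '' (hewitt X)ᶜ ⊆ j '' (range e)ᶜ := by
  rintro _ ⟨p, hp, rfl⟩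
  by_contra hpK
  obtain ⟨f, hf, hfp, hfX⟩ := notMem_hewitt_iff.1 hp
  obtain ⟨u, hu, hup, huK⟩ := CompletelyRegularSpace.completely_regular _ _ hK hpK
  set G : StoneCech X → ℝ := fun q => min 1 (|f q| + 2 * u (φ q))
  have hG : Continuous G := continuous_const.min
    (hf.abs.add (continuous_const.mul (continuous_subtype_val.comp (hu.comp hφ))))
  have hGX : ∀ x, 0 < G (stoneCechUnit x) := fun x =>
    lt_min one_pos (by linarith [(u (φ (stoneCechUnit x))).2.1, abs_pos.2 (hfX x)])
  have hGe : ∀ x, G (stoneCechUnit x) = min 1 (|f (stoneCechUnit x)| + 2 * u (j (e x))) :=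
    fun x => by simp only [G, show φ (stoneCechUnit x) = j (e x) from congrFun hext x]
  -- `u ∘ j = 1` on `Y \ X`, so `G = 1` on the part of `X` near `Y \ X`
  set h : Y → ℝ := extend e (G ∘ stoneCechUnit) fun _ => 1
  have hh : Continuous h := by
    refine he.continuous_extend_const (O := j ⁻¹' {z | 1 / 2 < (u z : ℝ)})
      (hG.comp continuous_stoneCechUnit)
      ((isOpen_lt continuous_const (continuous_subtype_val.comp hu)).preimage hj)
      (fun y hy => ?_) fun x hx => ?_
    · simp only [mem_preimage, mem_ofPred_eq, huK ⟨y, hy, rfl⟩]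
      norm_num
    · simp only [mem_preimage, mem_ofPred_eq, comp_apply] at hx ⊢
      rw [hGe]
      exact min_eq_left (by linarith [abs_nonneg (f (stoneCechUnit x))])
  have hhpos : ∀ y, 0 < h y := fun y => by
    by_cases hy : ∃ x, e x = y
    · obtain ⟨x, rfl⟩ := hy
      simpa [h, he.injective.extend_apply] using hGX x
    · simp [h, extend_apply' _ _ _ hy]
  obtain ⟨δ, hδ, hδh⟩ := isPseudocompactSpace_iff_forall_pos_exists_pos_le.1 hY h hh hhpos
  have hGp : G p < δ := by simpa [G, hfp, hup]
  obtain ⟨x, hx⟩ := denseRange_stoneCechUnit.exists_mem_open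
    (isOpen_lt hG continuous_const) ⟨p, hGp⟩
  have hδG : δ ≤ G (stoneCechUnit x) := by
    simpa only [h, he.injective.extend_apply, comp_apply] using hδh (e x)
  exact not_lt.2 hδG hx

theorem isPseudocompactSpace_of_compl_hewitt_subset (he : Continuous e) (hd : DenseRange e)
    (hj : IsInducing j) (hφ : Continuous φ) (hext : φ ∘ stoneCechUnit = j ∘ e)
    (hsub : φ '' (hewitt X)ᶜ ⊆ range j) : IsPseudocompactSpace Y := by
  refine isPseudocompactSpace_iff_forall_pos_exists_pos_le.2 fun h hh hpos => ?_
  set k : Y → Icc (0 : ℝ) 1 := fun y => projIcc 0 1 zero_le_one (h y)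
  have hk : Continuous k := continuous_projIcc.comp hh
  have hkpos : ∀ y, 0 < (k y : ℝ) := fun y => by
    simp only [k, coe_projIcc]; exact lt_max_of_lt_right (lt_min one_pos (hpos y))
  have hkh : ∀ y, (k y : ℝ) ≤ h y := fun y => by
    simp only [k, coe_projIcc]; exact max_le (hpos y).le (min_le_right _ _)
  obtain ⟨H, hH, hHk⟩ : ∃ H : StoneCech X → Icc (0 : ℝ) 1,
      Continuous H ∧ H ∘ stoneCechUnit = k ∘ e :=
    ⟨_, continuous_stoneCechExtend _, stoneCechExtend_extends (hk.comp he)⟩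
  have hHe : ∀ x, H (stoneCechUnit x) = k (e x) := congrFun hHk
  have hHpos : ∀ q, 0 < (H q : ℝ) := by
    intro q
    refine (H q).2.1.lt_of_ne fun hq => ?_
    have hq' : q ∉ hewitt X := notMem_hewitt_iff.2 ⟨fun q => H q,
      continuous_subtype_val.comp hH, hq.symm, fun x => by
        simpa only [hHe] using (hkpos (e x)).ne'⟩
    obtain ⟨y, hy⟩ := hsub ⟨q, hq', rfl⟩
    have hy_pos := hkpos y
    rw [← apply_eq_of_comp_eq_of_denseRange denseRange_stoneCechUnit hφ hj hext hH hk hHk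
      hy.symm] at hy_pos
    exact hy_pos.ne hq
  obtain ⟨δ, hδ, hδH⟩ := isCompact_univ.exists_forall_le'
    (continuous_subtype_val.comp hH).continuousOn fun q _ => hHpos q
  refine ⟨δ, hδ, fun y => hd.induction_on y (isClosed_le continuous_const hh) fun x => ?_⟩
  calc δ ≤ H (stoneCechUnit x) := hδH _ trivial
    _ = k (e x) := by rw [hHe]
    _ ≤ h (e x) := hkh _

end Remainder

theorem stmt19_general (X Y Z : Type) [TopologicalSpace X]
    [TopologicalSpace Y]
    [TopologicalSpace Z] [CompactSpace Z] [T2Space Z]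
    (e : X → Y) (he : Topology.IsEmbedding e) (hd : DenseRange e)
    (hrem : IsCompact (Set.range e)ᶜ)
    (j : Y → Z) (hj : Topology.IsEmbedding j)
    (φ : StoneCech X → Z) (hφ : Continuous φ) (hext : φ ∘ stoneCechUnit = j ∘ e) :
    IsPseudocompactSpace Y ↔
      closure ((hewitt X)ᶜ) ⊆ φ ⁻¹' (j '' (Set.range e)ᶜ) := by
  have hK : IsClosed (j '' (range e)ᶜ) := (hrem.image hj.continuous).isClosed
  constructor
  · intro hY
    have hoe : IsOpenEmbedding e := ⟨he, isClosed_compl_iff.1 <|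
      hj.injective.preimage_image (range e)ᶜ ▸ hK.preimage hj.continuous⟩
    exact closure_minimal (image_subset_iff.1 (image_compl_hewitt_subset_of_isPseudocompactSpace
      hY hoe hj.continuous hφ hext hK)) (hK.preimage hφ)
  · intro hsub
    exact isPseudocompactSpace_of_compl_hewitt_subset he.continuous hd hj.isInducing hφ hext
      ((image_subset_iff.2 (subset_closure.trans hsub)).trans (image_subset_range _ _))

/-- let `Y` be an extension of `X` with compact remainder, `ζY` (here `Z`)
a compactification of `Y`, and `φ : βX → ζY` the continuous extension of `id_X`. Then
`Y` is pseudocompact iff `cl_{βX}(βX \ υX) ⊆ φ⁻¹[Y \ X]`. -/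
theorem stmt19 (X Y Z : Type) [TopologicalSpace X] [T35Space X]
    [TopologicalSpace Y] [T35Space Y]
    [TopologicalSpace Z] [CompactSpace Z] [T2Space Z]
    (e : X → Y) (he : Topology.IsEmbedding e) (hd : DenseRange e)
    (hrem : IsCompact (Set.range e)ᶜ)
    (j : Y → Z) (hj : Topology.IsEmbedding j) (hjd : DenseRange j)
    (φ : StoneCech X → Z) (hφ : Continuous φ) (hext : φ ∘ stoneCechUnit = j ∘ e) :
    IsPseudocompactSpace Y ↔
      closure ((hewitt X)ᶜ) ⊆ φ ⁻¹' (j '' (Set.range e)ᶜ) :=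
  stmt19_general X Y Z e he hd hrem j hj φ hφ hext
end
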